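/- arXiv:2305.11584 — 6 statements merged into one kernel-verified Lean document; each statement's English description precedes it below -/
import Mathlib

section
/- Let H be a real inner product space, α > 0, r > 0, and let v, a ∈ H be such that 𝓈 := α·v − a is nonzero. Then for every s with ‖s‖ ≤ r, the identity ⟨s, v⟩ + (1/(2α))‖s − a‖² = (1/(2α))‖s + 𝓈‖² + (1/(2α))(‖a‖² − ‖𝓈‖²) holds, and consequently the maximizer of s ↦ ⟨s, v⟩ + (1/(2α))‖s − a‖² over the closed ball {s : ‖s‖ ≤ r} is ŝ = r·𝓈/‖𝓈‖. -/
open scoped RealInnerProductSpace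

/-- Equation (11): closed-form solution of the local perturbation subproblem of
FedSMOO.  For `α, r > 0` and `α • v - a ≠ 0`, the objective
`s ↦ ⟪s, v⟫ + (1/(2α))‖s − a‖²` satisfies the completing-the-square identity on
the ball and is maximized over the closed ball of radius `r` at
`ŝ = (r/‖α • v - a‖) • (α • v - a)`. -/
theorem local_perturbation_max
    {H : Type*} [NormedAddCommGroup H] [InnerProductSpace ℝ H]
    (α r : ℝ) (hα : 0 < α) (hr : 0 < r) (v a : H)
    (hne : α • v - a ≠ 0) :
    (∀ s : H, ‖s‖ ≤ r →
      ⟪s, v⟫ + (1 / (2 * α)) * ‖s - a‖ ^ 2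
        = (1 / (2 * α)) * ‖s + (α • v - a)‖ ^ 2
          + (1 / (2 * α)) * (‖a‖ ^ 2 - ‖α • v - a‖ ^ 2)) ∧
    ‖(r / ‖α • v - a‖) • (α • v - a)‖ ≤ r ∧
    (∀ s : H, ‖s‖ ≤ r →
      ⟪s, v⟫ + (1 / (2 * α)) * ‖s - a‖ ^ 2
        ≤ ⟪(r / ‖α • v - a‖) • (α • v - a), v⟫
          + (1 / (2 * α)) * ‖(r / ‖α • v - a‖) • (α • v - a) - a‖ ^ 2) := by
  have hbn : ‖α • v - a‖ ≠ 0 := norm_ne_zero_iff.mpr hne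
  have hbpos : 0 < ‖α • v - a‖ := norm_pos_iff.mpr hne
  have key : ∀ s : H, ⟪s, v⟫ + (1 / (2 * α)) * ‖s - a‖ ^ 2
      = (1 / (2 * α)) * ‖s + (α • v - a)‖ ^ 2
        + (1 / (2 * α)) * (‖a‖ ^ 2 - ‖α • v - a‖ ^ 2) := by
    intro s
    have h1 : ‖s - a‖ ^ 2 = ‖s‖ ^ 2 - 2 * ⟪s, a⟫ + ‖a‖ ^ 2 := norm_sub_sq_real s a
    have h2 : ‖s + (α • v - a)‖ ^ 2
        = ‖s‖ ^ 2 + 2 * ⟪s, α • v - a⟫ + ‖α • v - a‖ ^ 2 := norm_add_sq_real s _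
    have h3 : ⟪s, α • v - a⟫ = α * ⟪s, v⟫ - ⟪s, a⟫ := by
      rw [inner_sub_right, real_inner_smul_right]
    rw [h1, h2, h3]
    field_simp
    ring
  have hshat : ‖(r / ‖α • v - a‖) • (α • v - a)‖ = r := by
    rw [norm_smul, Real.norm_eq_abs, abs_of_pos (div_pos hr hbpos),
      div_mul_cancel₀ _ hbn]
  refine ⟨fun s _ => key s, le_of_eq hshat, fun s hs => ?_⟩
  rw [key s, key ((r / ‖α • v - a‖) • (α • v - a))]
  have hnorm : ‖(r / ‖α • v - a‖) • (α • v - a) + (α • v - a)‖ = r + ‖α • v - a‖ := by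
    have : (r / ‖α • v - a‖) • (α • v - a) + (α • v - a)
        = (r / ‖α • v - a‖ + 1) • (α • v - a) := by
      rw [add_smul, one_smul]
    rw [this, norm_smul, Real.norm_eq_abs,
      abs_of_pos (by positivity : (0:ℝ) < r / ‖α • v - a‖ + 1), add_mul, one_mul,
      div_mul_cancel₀ _ hbn]
  have htri : ‖s + (α • v - a)‖ ≤ r + ‖α • v - a‖ :=
    (norm_add_le _ _).trans (by linarith)
  have hsq : ‖s + (α • v - a)‖ ^ 2 ≤ ‖(r / ‖α • v - a‖) • (α • v - a) + (α • v - a)‖ ^ 2 := by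
    rw [hnorm]
    exact pow_le_pow_left₀ (norm_nonneg _) htri 2
  have hc : (0:ℝ) < 1 / (2 * α) := by positivity
  nlinarith [hsq]
end

section
/- Let H be a real inner product space, α > 0, r > 0, and let μ_1, …, μ_m and ŝ_1, …, ŝ_m be vectors in H such that 𝓈 := (1/m)∑_{i=1}^m (α·μ_i − ŝ_i) is nonzero. Then the maximizer of s ↦ (1/m)∑_{i=1}^m [⟨s, μ_i⟩ + (1/(2α))‖s − ŝ_i‖²] over the closed ball {s : ‖s‖ ≤ r} is ŝ = r·𝓈/‖𝓈‖. -/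
open scoped RealInnerProductSpace

/-- Equation (12): closed-form solution of the global perturbation aggregation
step of FedSMOO.  For `α, r > 0`, dual variables `μ i`, local perturbations
`shat i` and `(1/m) ∑ i, (α • μ i - shat i) ≠ 0`, the averaged objective
`s ↦ (1/m) ∑ i, (⟪s, μ i⟫ + (1/(2α))‖s − shat i‖²)` is maximized over the
closed ball of radius `r` at
`(r/‖(1/m) ∑ i, (α • μ i - shat i)‖) • ((1/m) ∑ i, (α • μ i - shat i))`. -/
theorem global_perturbation_max
    {H : Type*} [NormedAddCommGroup H] [InnerProductSpace ℝ H]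
    (m : ℕ) (hm : 0 < m) (α r : ℝ) (hα : 0 < α) (hr : 0 < r)
    (μ shat : Fin m → H)
    (hne : (m : ℝ)⁻¹ • ∑ i, (α • μ i - shat i) ≠ 0) :
    ‖(r / ‖(m : ℝ)⁻¹ • ∑ i, (α • μ i - shat i)‖) •
        ((m : ℝ)⁻¹ • ∑ i, (α • μ i - shat i))‖ ≤ r ∧
    ∀ s : H, ‖s‖ ≤ r →
      (m : ℝ)⁻¹ * ∑ i, (⟪s, μ i⟫ + (1 / (2 * α)) * ‖s - shat i‖ ^ 2)
        ≤ (m : ℝ)⁻¹ * ∑ i,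
            (⟪(r / ‖(m : ℝ)⁻¹ • ∑ j, (α • μ j - shat j)‖) •
                ((m : ℝ)⁻¹ • ∑ j, (α • μ j - shat j)), μ i⟫
              + (1 / (2 * α)) *
                ‖(r / ‖(m : ℝ)⁻¹ • ∑ j, (α • μ j - shat j)‖) •
                  ((m : ℝ)⁻¹ • ∑ j, (α • μ j - shat j)) - shat i‖ ^ 2) := by
  have hm' : (m : ℝ) ≠ 0 := Nat.cast_ne_zero.mpr hm.ne'
  set v : H := (m : ℝ)⁻¹ • ∑ i, (α • μ i - shat i) with hv
  have hvnorm : 0 < ‖v‖ := norm_pos_iff.mpr hne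
  set t : H := (r / ‖v‖) • v with ht
  have htnorm : ‖t‖ = r := by
    rw [ht, norm_smul, Real.norm_eq_abs, abs_of_pos (div_pos hr hvnorm),
      div_mul_cancel₀ _ hvnorm.ne']
  have htv : ⟪t, v⟫ = r * ‖v‖ := by
    rw [ht, real_inner_smul_left, real_inner_self_eq_norm_sq]
    field_simp
  have key : ∀ s : H, (m : ℝ)⁻¹ * ∑ i, (⟪s, μ i⟫ + (1 / (2 * α)) * ‖s - shat i‖ ^ 2)
      = (1 / (2 * α)) * ‖s‖ ^ 2 + (1 / α) * ⟪s, v⟫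
        + (m : ℝ)⁻¹ * ∑ i, (1 / (2 * α)) * ‖shat i‖ ^ 2 := by
    intro s
    have hsv : (∑ i, ⟪s, α • μ i - shat i⟫) = (m : ℝ) * ⟪s, v⟫ := by
      rw [hv, real_inner_smul_right, inner_sum, ← mul_assoc, mul_inv_cancel₀ hm', one_mul]
    have hterm : ∀ i ∈ Finset.univ, ⟪s, μ i⟫ + (1 / (2 * α)) * ‖s - shat i‖ ^ 2
        = (1 / (2 * α)) * ‖s‖ ^ 2 + (1 / α) * ⟪s, α • μ i - shat i⟫
          + (1 / (2 * α)) * ‖shat i‖ ^ 2 := by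
      intro i _
      rw [@norm_sub_sq_real, inner_sub_right, inner_smul_right]
      field_simp
      ring
    rw [Finset.sum_congr rfl hterm, Finset.sum_add_distrib, Finset.sum_add_distrib,
      Finset.sum_const, Finset.card_fin, nsmul_eq_mul, ← Finset.mul_sum, hsv]
    field_simp
  refine ⟨htnorm.le, fun s hs => ?_⟩
  rw [key s, key t]
  have h1 : ‖s‖ ^ 2 ≤ ‖t‖ ^ 2 := by
    rw [htnorm]
    exact pow_le_pow_left₀ (norm_nonneg s) hs 2
  have h2 : ⟪s, v⟫ ≤ ⟪t, v⟫ := by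
    rw [htv]
    calc ⟪s, v⟫ ≤ ‖s‖ * ‖v‖ := real_inner_le_norm s v
      _ ≤ r * ‖v‖ := by nlinarith
  have hc1 : (0:ℝ) < 1 / (2 * α) := by positivity
  have hc2 : (0:ℝ) < 1 / α := by positivity
  nlinarith
end

section
/- Let f_1, …, f_m : ℝ^d → ℝ be differentiable with L-Lipschitz gradients (L-smooth), f := (1/m)∑_{i=1}^m f_i, and let β > 0, r ≥ 0. Suppose for each i there are points w̃_i, w_i', and perturbations ŝ_i, ŝ_i' with ‖ŝ_i‖ ≤ r and ‖ŝ_i'‖ ≤ r; set λ_i := ∇f_i(w_i' + ŝ_i'), λ := (1/m)∑_{i=1}^m λ_i, and suppose w̄ is a point such that w̃_i − w̄ = β(λ_i − λ − ∇f_i(w̃_i + ŝ_i)) for every i. Define υ := (1/m)∑_{i=1}^m ‖w̃_i − w̄‖² and δ := (1/m)∑_{i=1}^m ‖w_i' − w̄‖². Then (1 − 12β²L²)·υ ≤ 30β²L²r² + 36β²L²·δ + 12β²‖∇f(w̄)‖². -/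
/-! Subtracting the gradients at `w̄` turns the first-order relation into
`w̃ᵢ - w̄ = β (Gᵢ - Ḡ - Bᵢ - ∇f(w̄))` with `Gᵢ = ∇fᵢ(wᵢ' + ŝᵢ') - ∇fᵢ(w̄)`,
`Bᵢ = ∇fᵢ(w̃ᵢ + ŝᵢ) - ∇fᵢ(w̄)` and `Ḡ` the mean of the `Gᵢ`. Smoothness bounds `‖Gᵢ‖²` by
`2L²(‖wᵢ' - w̄‖² + r²)` and `‖Bᵢ‖²` by `2L²(‖w̃ᵢ - w̄‖² + r²)`, and Jensen bounds `‖Ḡ‖²` by the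
mean of the `‖Gᵢ‖²`. Averaging `‖a - b - c - d‖² ≤ 4(‖a‖² + ‖b‖² + ‖c‖² + ‖d‖²)` over `i` then
gives `(1 - 8β²L²)υ ≤ 24β²L²r² + 16β²L²δ + 4β²‖∇f(w̄)‖²`, which is stronger than the claim. -/

open Finset

open InnerProductSpace in
theorem gradient_const_mul_sum {E ι : Type*} [NormedAddCommGroup E] [InnerProductSpace ℝ E]
    [CompleteSpace E] [Fintype ι] (f : ι → E → ℝ) (hf : ∀ i, Differentiable ℝ (f i))
    (c : ℝ) (x : E) :
    gradient (fun w => c * ∑ i, f i w) x = c • ∑ i, gradient (f i) x := by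
  refine HasGradientAt.gradient ?_
  rw [hasGradientAt_iff_hasFDerivAt, map_smul, map_sum]
  have hsum : HasFDerivAt (fun w => ∑ i, f i w) (∑ i, toDual ℝ E (gradient (f i) x)) x :=
    HasFDerivAt.fun_sum fun i _ => (hf i x).hasGradientAt.hasFDerivAt
  simpa using hsum.const_mul c

theorem sq_norm_sum_le_card_mul {E ι : Type*} [SeminormedAddCommGroup E] (s : Finset ι)
    (x : ι → E) : ‖∑ i ∈ s, x i‖ ^ 2 ≤ #s * ∑ i ∈ s, ‖x i‖ ^ 2 :=
  (pow_le_pow_left₀ (norm_nonneg _) (norm_sum_le s x) 2).trans sq_sum_le_card_mul_sum_sq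

theorem card_mul_sq_norm_average_le {E ι : Type*} [SeminormedAddCommGroup E] [NormedSpace ℝ E]
    (s : Finset ι) (x : ι → E) :
    #s * ‖(#s : ℝ)⁻¹ • ∑ i ∈ s, x i‖ ^ 2 ≤ ∑ i ∈ s, ‖x i‖ ^ 2 := by
  rcases Nat.eq_zero_or_pos #s with hs | hs
  · simp [card_eq_zero.mp hs]
  have hs' : (0 : ℝ) < #s := Nat.cast_pos.mpr hs
  rw [norm_smul, mul_pow, norm_inv, Real.norm_natCast, ← mul_assoc, sq, ← mul_assoc,
    mul_inv_cancel₀ hs'.ne', one_mul, inv_mul_le_iff₀ hs']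
  exact sq_norm_sum_le_card_mul s x

theorem sq_norm_sub_sub_sub_le {E : Type*} [SeminormedAddCommGroup E] (a b c d : E) :
    ‖a - b - c - d‖ ^ 2 ≤ 4 * (‖a‖ ^ 2 + ‖b‖ ^ 2 + ‖c‖ ^ 2 + ‖d‖ ^ 2) := by
  have htri : ‖a - b - c - d‖ ≤ ‖a‖ + ‖b‖ + ‖c‖ + ‖d‖ := by
    grw [norm_sub_le, norm_sub_le, norm_sub_le]
  grw [htri]
  nlinarith [sq_nonneg (‖a‖ - ‖b‖), sq_nonneg (‖a‖ - ‖c‖), sq_nonneg (‖a‖ - ‖d‖),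
    sq_nonneg (‖b‖ - ‖c‖), sq_nonneg (‖b‖ - ‖d‖), sq_nonneg (‖c‖ - ‖d‖)]

theorem sq_norm_sub_le_of_lipschitz {E F : Type*} [SeminormedAddCommGroup E]
    [SeminormedAddCommGroup F] {g : E → F} {L r : ℝ}
    (hg : ∀ x y, ‖g x - g y‖ ≤ L * ‖x - y‖) (x s y : E) (hs : ‖s‖ ≤ r) :
    ‖g (x + s) - g y‖ ^ 2 ≤ 2 * L ^ 2 * (‖x - y‖ ^ 2 + r ^ 2) := by
  have hdist : ‖x + s - y‖ ≤ ‖x - y‖ + r := by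
    rw [add_sub_right_comm]
    exact (norm_add_le _ _).trans (by gcongr)
  calc ‖g (x + s) - g y‖ ^ 2 ≤ L ^ 2 * ‖x + s - y‖ ^ 2 := by
        rw [← mul_pow]; exact pow_le_pow_left₀ (norm_nonneg _) (hg _ _) 2
    _ ≤ L ^ 2 * (‖x - y‖ + r) ^ 2 := by gcongr
    _ ≤ 2 * L ^ 2 * (‖x - y‖ ^ 2 + r ^ 2) := by
        nlinarith [sq_nonneg L, mul_nonneg (sq_nonneg L) (sq_nonneg (‖x - y‖ - r))]

theorem sum_sq_norm_le_of_decomposition {E ι : Type*} [SeminormedAddCommGroup E]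
    [NormedSpace ℝ E] [Fintype ι] (β L r : ℝ) (u p G B : ι → E) (D : E)
    (hu : ∀ i, u i = β • (G i - (Fintype.card ι : ℝ)⁻¹ • ∑ j, G j - B i - D))
    (hG : ∀ i, ‖G i‖ ^ 2 ≤ 2 * L ^ 2 * (‖p i‖ ^ 2 + r ^ 2))
    (hB : ∀ i, ‖B i‖ ^ 2 ≤ 2 * L ^ 2 * (‖u i‖ ^ 2 + r ^ 2)) :
    (1 - 8 * β ^ 2 * L ^ 2) * ∑ i, ‖u i‖ ^ 2
      ≤ Fintype.card ι * (24 * β ^ 2 * L ^ 2 * r ^ 2 + 4 * β ^ 2 * ‖D‖ ^ 2)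
        + 16 * β ^ 2 * L ^ 2 * ∑ i, ‖p i‖ ^ 2 := by
  set n : ℝ := (Fintype.card ι : ℝ)
  set Gavg := n⁻¹ • ∑ j, G j
  have hu_sq : ∀ i, ‖u i‖ ^ 2
      ≤ 4 * β ^ 2 * (‖G i‖ ^ 2 + ‖Gavg‖ ^ 2 + ‖B i‖ ^ 2 + ‖D‖ ^ 2) := fun i => by
    rw [hu i, norm_smul, mul_pow, Real.norm_eq_abs, sq_abs, mul_assoc, mul_left_comm]
    gcongr
    exact sq_norm_sub_sub_sub_le _ _ _ _
  have hGavg : n * ‖Gavg‖ ^ 2 ≤ ∑ i, ‖G i‖ ^ 2 := card_mul_sq_norm_average_le univ G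
  have hsum := sum_le_sum fun i (_ : i ∈ univ) => hu_sq i
  have hGsum := sum_le_sum fun i (_ : i ∈ univ) => hG i
  have hBsum := sum_le_sum fun i (_ : i ∈ univ) => hB i
  simp only [← mul_sum, sum_add_distrib, sum_const, card_univ, nsmul_eq_mul] at hsum hGsum hBsum
  have hβ2 : 0 ≤ β ^ 2 := sq_nonneg β
  linarith [mul_le_mul_of_nonneg_left hGavg hβ2, mul_le_mul_of_nonneg_left hGsum hβ2,
    mul_le_mul_of_nonneg_left hBsum hβ2]

theorem local_update_bound_general
    {d m : ℕ} (L β r : ℝ)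
    (f : Fin m → EuclideanSpace ℝ (Fin d) → ℝ)
    (hdiff : ∀ i, Differentiable ℝ (f i))
    (hsmooth : ∀ i x y, ‖gradient (f i) x - gradient (f i) y‖ ≤ L * ‖x - y‖)
    (wtilde wprev shat shat' : Fin m → EuclideanSpace ℝ (Fin d))
    (hshat : ∀ i, ‖shat i‖ ≤ r) (hshat' : ∀ i, ‖shat' i‖ ≤ r)
    (wbar : EuclideanSpace ℝ (Fin d))
    (hfo : ∀ i, wtilde i - wbar
      = β • (gradient (f i) (wprev i + shat' i)
          - (m : ℝ)⁻¹ • (∑ j, gradient (f j) (wprev j + shat' j))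
          - gradient (f i) (wtilde i + shat i))) :
    (1 - 12 * β ^ 2 * L ^ 2) * ((m : ℝ)⁻¹ * ∑ i, ‖wtilde i - wbar‖ ^ 2)
      ≤ 30 * β ^ 2 * L ^ 2 * r ^ 2
        + 36 * β ^ 2 * L ^ 2 * ((m : ℝ)⁻¹ * ∑ i, ‖wprev i - wbar‖ ^ 2)
        + 12 * β ^ 2 * ‖gradient (fun w => (m : ℝ)⁻¹ * ∑ i, f i w) wbar‖ ^ 2 := by
  set D := gradient (fun w => (m : ℝ)⁻¹ * ∑ i, f i w) wbar
  set G := fun i => gradient (f i) (wprev i + shat' i) - gradient (f i) wbar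
  set B := fun i => gradient (f i) (wtilde i + shat i) - gradient (f i) wbar
  have hD : D = (m : ℝ)⁻¹ • ∑ j, gradient (f j) wbar := gradient_const_mul_sum f hdiff _ wbar
  have hdecomp : ∀ i, wtilde i - wbar
      = β • (G i - (Fintype.card (Fin m) : ℝ)⁻¹ • ∑ j, G j - B i - D) := fun i => by
    rw [hfo i, Fintype.card_fin, hD]
    simp only [G, B, sum_sub_distrib, smul_sub]
    abel
  have hsum := sum_sq_norm_le_of_decomposition β L r (fun i => wtilde i - wbar)
    (fun i => wprev i - wbar) G B D hdecomp
    (fun i => sq_norm_sub_le_of_lipschitz (hsmooth i) _ _ _ (hshat' i))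
    (fun i => sq_norm_sub_le_of_lipschitz (hsmooth i) _ _ _ (hshat i))
  rw [Fintype.card_fin] at hsum
  have hυ : 0 ≤ (m : ℝ)⁻¹ * ∑ i, ‖wtilde i - wbar‖ ^ 2 := by positivity
  have hδ : 0 ≤ (m : ℝ)⁻¹ * ∑ i, ‖wprev i - wbar‖ ^ 2 := by positivity
  calc (1 - 12 * β ^ 2 * L ^ 2) * ((m : ℝ)⁻¹ * ∑ i, ‖wtilde i - wbar‖ ^ 2)
      ≤ (m : ℝ)⁻¹ * ((1 - 8 * β ^ 2 * L ^ 2) * ∑ i, ‖wtilde i - wbar‖ ^ 2) := by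
        linarith [mul_nonneg (mul_nonneg (sq_nonneg β) (sq_nonneg L)) hυ]
    _ ≤ (m : ℝ)⁻¹ * (m * (24 * β ^ 2 * L ^ 2 * r ^ 2 + 4 * β ^ 2 * ‖D‖ ^ 2)
          + 16 * β ^ 2 * L ^ 2 * ∑ i, ‖wprev i - wbar‖ ^ 2) := by gcongr
    _ = ((m : ℝ)⁻¹ * m) * (24 * β ^ 2 * L ^ 2 * r ^ 2 + 4 * β ^ 2 * ‖D‖ ^ 2)
          + 16 * β ^ 2 * L ^ 2 * ((m : ℝ)⁻¹ * ∑ i, ‖wprev i - wbar‖ ^ 2) := by ring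
    _ ≤ 24 * β ^ 2 * L ^ 2 * r ^ 2 + 4 * β ^ 2 * ‖D‖ ^ 2
          + 16 * β ^ 2 * L ^ 2 * ((m : ℝ)⁻¹ * ∑ i, ‖wprev i - wbar‖ ^ 2) := by
        grw [inv_mul_le_one, one_mul]
    _ ≤ _ := by
        linarith [mul_nonneg (mul_nonneg (sq_nonneg β) (sq_nonneg L)) hδ,
          mul_nonneg (mul_nonneg (sq_nonneg β) (sq_nonneg L)) (sq_nonneg r),
          mul_nonneg (sq_nonneg β) (sq_nonneg ‖D‖)]

/-- Deterministic core of Lemma B.2: bound on the averaged local-update term of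
the FedSMOO iterates.  Each `f i : ℝ^d → ℝ` is differentiable with `L`-Lipschitz
gradient, `f = (1/m) ∑ i, f i`, the local solutions satisfy the first-order
relation `w̃ i - w̄ = β (λ i - λ - ∇f i (w̃ i + ŝ i))` with duals
`λ i = ∇f i (w' i + ŝ' i)` and `λ` their average, and the perturbations have
norm at most `r`.  Then
`(1 - 12β²L²)·υ ≤ 30β²L²r² + 36β²L²·δ + 12β²‖∇f(w̄)‖²` where
`υ = (1/m) ∑ i, ‖w̃ i - w̄‖²` and `δ = (1/m) ∑ i, ‖w' i - w̄‖²`. -/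
theorem local_update_bound
    {d m : ℕ} (hm : 0 < m) (L β r : ℝ) (hβ : 0 < β) (hr : 0 ≤ r)
    (f : Fin m → EuclideanSpace ℝ (Fin d) → ℝ)
    (hdiff : ∀ i, Differentiable ℝ (f i))
    (hsmooth : ∀ i x y, ‖gradient (f i) x - gradient (f i) y‖ ≤ L * ‖x - y‖)
    (wtilde wprev shat shat' : Fin m → EuclideanSpace ℝ (Fin d))
    (hshat : ∀ i, ‖shat i‖ ≤ r) (hshat' : ∀ i, ‖shat' i‖ ≤ r)
    (wbar : EuclideanSpace ℝ (Fin d))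
    (hfo : ∀ i, wtilde i - wbar
      = β • (gradient (f i) (wprev i + shat' i)
          - (m : ℝ)⁻¹ • (∑ j, gradient (f j) (wprev j + shat' j))
          - gradient (f i) (wtilde i + shat i))) :
    (1 - 12 * β ^ 2 * L ^ 2) * ((m : ℝ)⁻¹ * ∑ i, ‖wtilde i - wbar‖ ^ 2)
      ≤ 30 * β ^ 2 * L ^ 2 * r ^ 2
        + 36 * β ^ 2 * L ^ 2 * ((m : ℝ)⁻¹ * ∑ i, ‖wprev i - wbar‖ ^ 2)
        + 12 * β ^ 2 * ‖gradient (fun w => (m : ℝ)⁻¹ * ∑ i, f i w) wbar‖ ^ 2 :=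
  local_update_bound_general L β r f hdiff hsmooth wtilde wprev shat shat' hshat hshat' wbar hfo
end

section
/- Let L, β, r > 0 and let m ≥ n > 0 be reals with 2m − n > 0. Let p, q ≥ 0 satisfy p(1 − 12β²L²) = L(1 + 2βL)/2 + q(6m − 2n)/(2m − n) and q·n/(2m − n) = 36pβ²L². Suppose the reals F, F', υ, δ', δ, G with υ, δ', δ, G ≥ 0 satisfy: (i) F' ≤ F + βL²r² + (L(1 + 2βL)/2)·υ − (β/2)·G; (ii) (1 − 12β²L²)·υ ≤ 30β²L²r² + 36β²L²·δ' + 12β²·G; (iii) δ ≤ ((2m − 2n)/(2m − n))·δ' + ((6m − 2n)/(2m − n))·υ. Then (β/2 − 12pβ²)·G ≤ (F + q·δ') − (F' + q·δ) + (1 + 30pβ)·βL²r². -/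
/-- Lyapunov combination step in the proof of Theorem 4.1: combining the
descent inequality, `p` times the local-update bound (Lemma B.2) and `q` times
the divergence-drift bound (Lemma B.3), with `p, q` solving the stated linear
system, yields a per-round decrease of the potential `F + q·δ'` up to a
constant term proportional to `βL²r²`. -/
theorem lyapunov_combination
    (L β r m n : ℝ) (hL : 0 < L) (hβ : 0 < β) (hr : 0 < r)
    (hn : 0 < n) (hnm : n ≤ m) (hmn : 0 < 2 * m - n)
    (p q : ℝ) (hp0 : 0 ≤ p) (hq0 : 0 ≤ q)
    (hpq1 : p * (1 - 12 * β ^ 2 * L ^ 2)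
      = L * (1 + 2 * β * L) / 2 + q * (6 * m - 2 * n) / (2 * m - n))
    (hpq2 : q * n / (2 * m - n) = 36 * p * β ^ 2 * L ^ 2)
    (F F' υ δ' δ G : ℝ)
    (hυ : 0 ≤ υ) (hδ' : 0 ≤ δ') (hδ : 0 ≤ δ) (hG : 0 ≤ G)
    (h1 : F' ≤ F + β * L ^ 2 * r ^ 2
      + (L * (1 + 2 * β * L) / 2) * υ - (β / 2) * G)
    (h2 : (1 - 12 * β ^ 2 * L ^ 2) * υ
      ≤ 30 * β ^ 2 * L ^ 2 * r ^ 2 + 36 * β ^ 2 * L ^ 2 * δ' + 12 * β ^ 2 * G)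
    (h3 : δ ≤ ((2 * m - 2 * n) / (2 * m - n)) * δ'
      + ((6 * m - 2 * n) / (2 * m - n)) * υ) :
    (β / 2 - 12 * p * β ^ 2) * G
      ≤ (F + q * δ') - (F' + q * δ) + (1 + 30 * p * β) * β * L ^ 2 * r ^ 2 := by

  have hc : (2*m-n) ≠ 0 := ne_of_gt hmn
  have h2' : p*((1-12*β^2*L^2)*υ) ≤ p*(30*β^2*L^2*r^2 + 36*β^2*L^2*δ' + 12*β^2*G) :=
    mul_le_mul_of_nonneg_left h2 hp0
  have h3' : q*δ ≤ q*(((2*m-2*n)/(2*m-n))*δ' + ((6*m-2*n)/(2*m-n))*υ) :=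
    mul_le_mul_of_nonneg_left h3 hq0
  have e1 : p*((1-12*β^2*L^2)*υ) = (L*(1+2*β*L)/2)*υ + q*(6*m-2*n)/(2*m-n)*υ := by
    rw [show p*((1-12*β^2*L^2)*υ) = p*(1-12*β^2*L^2)*υ by ring, hpq1]; ring
  have e2 : p*(36*β^2*L^2*δ') = q*n/(2*m-n)*δ' := by
    rw [hpq2]; ring
  have e3 : q*n/(2*m-n)*δ' + q*((2*m-2*n)/(2*m-n))*δ' = q*δ' := by
    field_simp; ring
  have e4 : q*(((2*m-2*n)/(2*m-n))*δ' + ((6*m-2*n)/(2*m-n))*υ)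
      = q*((2*m-2*n)/(2*m-n))*δ' + q*(6*m-2*n)/(2*m-n)*υ := by ring
  rw [e4] at h3'
  nlinarith [h1, h2', h3', e1, e2, e3]
end

section
/- Let L ≥ 1 be an integer and for l = 1, …, L let A_l and S_l be continuous linear maps between normed spaces, composed with 1-Lipschitz maps φ_l fixing the origin (φ_l(0) = 0), so that the network output on input x is f_A(x) = A_L(φ_{L−1}(A_{L−1}(⋯ φ_1(A_1 x)⋯))). Assume each operator norm ‖A_l‖ > 0 and the perturbations satisfy ‖S_l‖ ≤ (1/L)‖A_l‖ for every l. Then for every input x, ‖f_{A+S}(x) − f_A(x)‖ ≤ e · ‖x‖ · (∏_{l=1}^L ‖A_l‖) · ∑_{l=1}^L ‖S_l‖/‖A_l‖. -/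
set_option maxHeartbeats 1000000


/-- The hidden state of a feed-forward network: `hiddenLayer A φ l x` is the
result of applying layers `1, …, l` (each a continuous linear map `A k`
followed by the activation `φ k`) to the input `x`. -/
noncomputable def hiddenLayer {E : Type*} [NormedAddCommGroup E] [NormedSpace ℝ E]
    (A : ℕ → E →L[ℝ] E) (φ : ℕ → E → E) : ℕ → E → E
  | 0, x => x
  | l + 1, x => φ (l + 1) (A (l + 1) (hiddenLayer A φ l x))

/-- The output of an `L`-layer feed-forward network on input `x`:
`f_A(x) = A_L (φ_{L-1} (A_{L-1} (⋯ φ_1 (A_1 x) ⋯)))`. -/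
noncomputable def netOut {E : Type*} [NormedAddCommGroup E] [NormedSpace ℝ E]
    (L : ℕ) (A : ℕ → E →L[ℝ] E) (φ : ℕ → E → E) (x : E) : E :=
  A L (hiddenLayer A φ (L - 1) x)

/-- Network perturbation lemma (Lemma C.2, from Neyshabur et al.) used in the
proof of Theorem 4.4: for an `L`-layer network with 1-Lipschitz activations
fixing the origin and layerwise perturbations `S l` with
`‖S l‖ ≤ ‖A l‖/L`, the change of output is bounded by
`e · ‖x‖ · (∏ l, ‖A l‖) · ∑ l, ‖S l‖/‖A l‖`. -/
theorem network_perturbation_bound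
    {E : Type*} [NormedAddCommGroup E] [NormedSpace ℝ E]
    (L : ℕ) (hL : 1 ≤ L)
    (A S : ℕ → E →L[ℝ] E) (φ : ℕ → E → E)
    (hφ : ∀ l ∈ Finset.Icc 1 (L - 1), LipschitzWith 1 (φ l) ∧ φ l 0 = 0)
    (hA : ∀ l ∈ Finset.Icc 1 L, 0 < ‖A l‖)
    (hS : ∀ l ∈ Finset.Icc 1 L, ‖S l‖ ≤ ‖A l‖ / (L : ℝ))
    (x : E) :
    ‖netOut L (fun l => A l + S l) φ x - netOut L A φ x‖
      ≤ Real.exp 1 * ‖x‖ * (∏ l ∈ Finset.Icc 1 L, ‖A l‖)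
        * ∑ l ∈ Finset.Icc 1 L, ‖S l‖ / ‖A l‖ := by
  obtain ⟨m, rfl⟩ : ∃ m, L = m + 1 := ⟨L - 1, by omega⟩
  simp only [Nat.add_sub_cancel] at hφ
  have hLpos : (0:ℝ) < (m + 1 : ℕ) := by positivity
  set c : ℝ := 1 + 1 / ((m + 1 : ℕ) : ℝ) with hcdef
  have hinv0 : (0:ℝ) ≤ 1 / ((m + 1 : ℕ) : ℝ) := by positivity
  have hc1 : (1:ℝ) ≤ c := by simp only [hcdef]; linarith
  have hc0 : (0:ℝ) ≤ c := by linarith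
  -- activations are norm-nonexpansive
  have hφn : ∀ l ∈ Finset.Icc 1 m, ∀ y, ‖φ l y‖ ≤ ‖y‖ := by
    intro l hl y
    obtain ⟨hlip, h0⟩ := hφ l hl
    have := hlip.dist_le_mul y 0
    simpa [h0, dist_eq_norm] using this
  have hφd : ∀ l ∈ Finset.Icc 1 m, ∀ y z, ‖φ l y - φ l z‖ ≤ ‖y - z‖ := by
    intro l hl y z
    have := (hφ l hl).1.dist_le_mul y z
    simpa [dist_eq_norm] using this
  -- perturbation smallness restated
  have hSc : ∀ l ∈ Finset.Icc 1 (m+1), ‖A l‖ + ‖S l‖ ≤ c * ‖A l‖ := by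
    intro l hl
    have h1 := hS l hl
    have h2 := hA l hl
    have : ‖A l‖ / ((m + 1 : ℕ) : ℝ) = (1 / ((m + 1 : ℕ) : ℝ)) * ‖A l‖ := by ring
    rw [this] at h1
    simp only [hcdef]
    nlinarith
  have key : ∀ l, l ≤ m →
      ‖hiddenLayer (fun k => A k + S k) φ l x‖
        ≤ c ^ l * ‖x‖ * ∏ k ∈ Finset.Icc 1 l, ‖A k‖
      ∧ ‖hiddenLayer (fun k => A k + S k) φ l x - hiddenLayer A φ l x‖
        ≤ c ^ l * ‖x‖ * (∏ k ∈ Finset.Icc 1 l, ‖A k‖)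
          * ∑ k ∈ Finset.Icc 1 l, ‖S k‖ / ‖A k‖ := by
    intro l
    induction l with
    | zero =>
        intro _
        constructor
        · simp [hiddenLayer]
        · simp [hiddenLayer]
    | succ n ih =>
        intro hl
        have hn1 : n + 1 ∈ Finset.Icc 1 m := by simp; omega
        have hnL : n + 1 ∈ Finset.Icc 1 (m+1) := by simp; omega
        obtain ⟨ih1, ih2⟩ := ih (by omega)
        set h' := hiddenLayer (fun k => A k + S k) φ n x with hh'
        set h := hiddenLayer A φ n x with hh
        have hApos : 0 < ‖A (n+1)‖ := hA _ hnL
        have hprod : (∏ k ∈ Finset.Icc 1 (n+1), ‖A k‖)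
            = (∏ k ∈ Finset.Icc 1 n, ‖A k‖) * ‖A (n+1)‖ :=
          Finset.prod_Icc_succ_top (by omega) _
        have hsum : (∑ k ∈ Finset.Icc 1 (n+1), ‖S k‖ / ‖A k‖)
            = (∑ k ∈ Finset.Icc 1 n, ‖S k‖ / ‖A k‖) + ‖S (n+1)‖ / ‖A (n+1)‖ :=
          Finset.sum_Icc_succ_top (by omega) _
        have hP0 : 0 ≤ ∏ k ∈ Finset.Icc 1 n, ‖A k‖ :=
          Finset.prod_nonneg fun _ _ => norm_nonneg _
        have hSig0 : 0 ≤ ∑ k ∈ Finset.Icc 1 n, ‖S k‖ / ‖A k‖ :=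
          Finset.sum_nonneg fun k _ => by positivity
        have e1 : hiddenLayer (fun k => A k + S k) φ (n+1) x
            = φ (n+1) ((A (n+1) + S (n+1)) h') := rfl
        have e2 : hiddenLayer A φ (n+1) x = φ (n+1) (A (n+1) h) := rfl
        clear_value h' h
        constructor
        · rw [e1]
          calc ‖φ (n+1) ((A (n+1) + S (n+1)) h')‖
              ≤ ‖(A (n+1) + S (n+1)) h'‖ := hφn _ hn1 _
            _ ≤ ‖A (n+1) + S (n+1)‖ * ‖h'‖ := ContinuousLinearMap.le_opNorm _ _
            _ ≤ (c * ‖A (n+1)‖) * ‖h'‖ := by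
                apply mul_le_mul_of_nonneg_right _ (norm_nonneg _)
                calc ‖A (n+1) + S (n+1)‖ ≤ ‖A (n+1)‖ + ‖S (n+1)‖ := norm_add_le _ _
                  _ ≤ c * ‖A (n+1)‖ := hSc _ hnL
            _ ≤ (c * ‖A (n+1)‖) * (c ^ n * ‖x‖ * ∏ k ∈ Finset.Icc 1 n, ‖A k‖) := by
                apply mul_le_mul_of_nonneg_left ih1 (by positivity)
            _ = c ^ (n+1) * ‖x‖ * ∏ k ∈ Finset.Icc 1 (n+1), ‖A k‖ := by
                rw [hprod]; ring
        · rw [e1, e2]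
          calc ‖φ (n+1) ((A (n+1) + S (n+1)) h') - φ (n+1) (A (n+1) h)‖
              ≤ ‖(A (n+1) + S (n+1)) h' - A (n+1) h‖ := hφd _ hn1 _ _
            _ = ‖A (n+1) (h' - h) + S (n+1) h'‖ := by
                congr 1
                simp only [ContinuousLinearMap.add_apply, map_sub]
                abel
            _ ≤ ‖A (n+1) (h' - h)‖ + ‖S (n+1) h'‖ := norm_add_le _ _
            _ ≤ ‖A (n+1)‖ * ‖h' - h‖ + ‖S (n+1)‖ * ‖h'‖ :=
                add_le_add (ContinuousLinearMap.le_opNorm _ _)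
                  (ContinuousLinearMap.le_opNorm _ _)
            _ ≤ ‖A (n+1)‖ *
                  (c ^ n * ‖x‖ * (∏ k ∈ Finset.Icc 1 n, ‖A k‖)
                    * ∑ k ∈ Finset.Icc 1 n, ‖S k‖ / ‖A k‖)
                + (‖S (n+1)‖ / ‖A (n+1)‖ * ‖A (n+1)‖)
                    * (c ^ n * ‖x‖ * ∏ k ∈ Finset.Icc 1 n, ‖A k‖) := by
                apply add_le_add
                · exact mul_le_mul_of_nonneg_left ih2 hApos.le
                · rw [div_mul_cancel₀ _ (ne_of_gt hApos)]
                  exact mul_le_mul_of_nonneg_left ih1 (norm_nonneg _)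
            _ = c ^ n * ‖x‖ * ((∏ k ∈ Finset.Icc 1 n, ‖A k‖) * ‖A (n+1)‖)
                  * ((∑ k ∈ Finset.Icc 1 n, ‖S k‖ / ‖A k‖) + ‖S (n+1)‖ / ‖A (n+1)‖) := by
                ring
            _ ≤ c ^ (n+1) * ‖x‖ * (∏ k ∈ Finset.Icc 1 (n+1), ‖A k‖)
                  * ∑ k ∈ Finset.Icc 1 (n+1), ‖S k‖ / ‖A k‖ := by
                rw [hprod, hsum]
                have hq : 0 ≤ (∏ k ∈ Finset.Icc 1 n, ‖A k‖) * ‖A (n+1)‖ := by positivity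
                have hr : 0 ≤ (∑ k ∈ Finset.Icc 1 n, ‖S k‖ / ‖A k‖)
                    + ‖S (n+1)‖ / ‖A (n+1)‖ := by positivity
                have hcc : c ^ n ≤ c ^ (n+1) := pow_le_pow_right₀ hc1 (Nat.le_succ n)
                exact mul_le_mul_of_nonneg_right (mul_le_mul_of_nonneg_right
                  (mul_le_mul_of_nonneg_right hcc (norm_nonneg x)) hq) hr
  obtain ⟨k1, k2⟩ := key m le_rfl
  set h' := hiddenLayer (fun k => A k + S k) φ m x with hh'
  set h := hiddenLayer A φ m x with hh
  have hmL : m + 1 ∈ Finset.Icc 1 (m+1) := by simp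
  have hApos : 0 < ‖A (m+1)‖ := hA _ hmL
  have hprod : (∏ k ∈ Finset.Icc 1 (m+1), ‖A k‖)
      = (∏ k ∈ Finset.Icc 1 m, ‖A k‖) * ‖A (m+1)‖ :=
    Finset.prod_Icc_succ_top (by omega) _
  have hsum : (∑ k ∈ Finset.Icc 1 (m+1), ‖S k‖ / ‖A k‖)
      = (∑ k ∈ Finset.Icc 1 m, ‖S k‖ / ‖A k‖) + ‖S (m+1)‖ / ‖A (m+1)‖ :=
    Finset.sum_Icc_succ_top (by omega) _
  have hP0 : 0 ≤ ∏ k ∈ Finset.Icc 1 m, ‖A k‖ :=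
    Finset.prod_nonneg fun _ _ => norm_nonneg _
  have hce : c ^ m ≤ Real.exp 1 := by
    have h1 : c ≤ Real.exp (1 / ((m + 1 : ℕ) : ℝ)) := by
      simpa [hcdef, add_comm] using Real.add_one_le_exp (1 / ((m + 1 : ℕ) : ℝ))
    calc c ^ m ≤ c ^ (m+1) := pow_le_pow_right₀ hc1 (Nat.le_succ m)
      _ ≤ (Real.exp (1 / ((m + 1 : ℕ) : ℝ))) ^ (m+1) :=
          pow_le_pow_left₀ hc0 h1 _
      _ = Real.exp (((m + 1 : ℕ) : ℝ) * (1 / ((m + 1 : ℕ) : ℝ))) := by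
          rw [Real.exp_nat_mul]
      _ = Real.exp 1 := by
          rw [mul_one_div, div_self (ne_of_gt hLpos)]
  have e1 : netOut (m+1) (fun k => A k + S k) φ x = (A (m+1) + S (m+1)) h' := rfl
  have e2 : netOut (m+1) A φ x = A (m+1) h := rfl
  clear_value h' h
  rw [e1, e2]
  calc ‖(A (m+1) + S (m+1)) h' - A (m+1) h‖
      = ‖A (m+1) (h' - h) + S (m+1) h'‖ := by
        congr 1
        simp only [ContinuousLinearMap.add_apply, map_sub]
        abel
    _ ≤ ‖A (m+1) (h' - h)‖ + ‖S (m+1) h'‖ := norm_add_le _ _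
    _ ≤ ‖A (m+1)‖ * ‖h' - h‖ + ‖S (m+1)‖ * ‖h'‖ :=
        add_le_add (ContinuousLinearMap.le_opNorm _ _) (ContinuousLinearMap.le_opNorm _ _)
    _ ≤ ‖A (m+1)‖ *
          (c ^ m * ‖x‖ * (∏ k ∈ Finset.Icc 1 m, ‖A k‖)
            * ∑ k ∈ Finset.Icc 1 m, ‖S k‖ / ‖A k‖)
        + (‖S (m+1)‖ / ‖A (m+1)‖ * ‖A (m+1)‖)
            * (c ^ m * ‖x‖ * ∏ k ∈ Finset.Icc 1 m, ‖A k‖) := by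
        apply add_le_add
        · exact mul_le_mul_of_nonneg_left k2 hApos.le
        · rw [div_mul_cancel₀ _ (ne_of_gt hApos)]
          exact mul_le_mul_of_nonneg_left k1 (norm_nonneg _)
    _ = c ^ m * ‖x‖ * ((∏ k ∈ Finset.Icc 1 m, ‖A k‖) * ‖A (m+1)‖)
          * ((∑ k ∈ Finset.Icc 1 m, ‖S k‖ / ‖A k‖) + ‖S (m+1)‖ / ‖A (m+1)‖) := by
        ring
    _ ≤ Real.exp 1 * ‖x‖ * (∏ k ∈ Finset.Icc 1 (m+1), ‖A k‖)
          * ∑ k ∈ Finset.Icc 1 (m+1), ‖S k‖ / ‖A k‖ := by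
        rw [hprod, hsum]
        have hq : 0 ≤ (∏ k ∈ Finset.Icc 1 m, ‖A k‖) * ‖A (m+1)‖ := by positivity
        have hr : 0 ≤ (∑ k ∈ Finset.Icc 1 m, ‖S k‖ / ‖A k‖)
            + ‖S (m+1)‖ / ‖A (m+1)‖ := by positivity
        exact mul_le_mul_of_nonneg_right (mul_le_mul_of_nonneg_right
          (mul_le_mul_of_nonneg_right hce (norm_nonneg x)) hq) hr
end

section
/- Let L > 0, let m ≥ n > 0 be reals with 2m − n > 0, let β > 0 and r ≥ 0, and suppose D := 1 + 60β²L² − 216mβ²L²/n > 0. Define p := (L(1 + 2βL)/2)/D, q := 36pβ²L²(2m − n)/n, and ζ := β/2 − 12pβ², and assume ζ > 0. Suppose the nonnegative real sequences υ_t, δ_t, G_t and the real sequence F_t with F_t ≥ f* for all t satisfy, for every t = 1, …, T: (i) F_{t+1} ≤ F_t + βL²r² + (L(1 + 2βL)/2)·υ_t − (β/2)·G_t; (ii) (1 − 12β²L²)·υ_t ≤ 30β²L²r² + 36β²L²·δ_{t−1} + 12β²·G_t; (iii) δ_t ≤ ((2m − 2n)/(2m − n))·δ_{t−1} + ((6m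 − 2n)/(2m − n))·υ_t. Then (1/T)∑_{t=1}^T G_t ≤ (F_1 − f* + q·δ_0)/(ζT) + (1 + 30pβ)·βL²r²/ζ. -/
/-!
The quantity `Φ t = F (t + 1) + q δ t` is a Lyapunov function. Adding to the descent inequality
(i) the multiple `p` of the local-update bound (ii) and the multiple `q` of the drift recursion
(iii), the constants `p` and `q` are exactly those for which the `υ t` terms cancel and the
`δ (t - 1)` terms recombine into `q δ (t - 1)`; what is left is
`Φ t + ζ G t ≤ Φ (t - 1) + (1 + 30 p β) β L² r²`. Telescoping over `t = 1, …, T` and using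
`F (T + 1) ≥ f*`, `δ T ≥ 0` bounds `ζ ∑ G t`.
-/

theorem Finset.add_sum_Icc_le_of_le_add {α : Type*} [AddCommGroup α] [PartialOrder α]
    [IsOrderedAddMonoid α] {Φ g : ℕ → α} {c : α} {T : ℕ}
    (h : ∀ t ∈ Finset.Icc 1 T, Φ t + g t ≤ Φ (t - 1) + c) :
    Φ T + ∑ t ∈ Finset.Icc 1 T, g t ≤ Φ 0 + T • c := by
  induction T with
  | zero => simp
  | succ k ih =>
    have hk : Φ k + ∑ t ∈ Finset.Icc 1 k, g t ≤ Φ 0 + k • c :=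
      ih fun t ht => h t (Finset.Icc_subset_Icc_right k.le_succ ht)
    have hstep : Φ (k + 1) + g (k + 1) ≤ Φ k + c :=
      h (k + 1) (Finset.mem_Icc.2 ⟨k.succ_pos, le_rfl⟩)
    rw [Finset.sum_Icc_succ_top (by omega), succ_nsmul]
    calc Φ (k + 1) + (∑ t ∈ Finset.Icc 1 k, g t + g (k + 1))
        = (Φ (k + 1) + g (k + 1)) + ∑ t ∈ Finset.Icc 1 k, g t := by abel
      _ ≤ (Φ k + c) + ∑ t ∈ Finset.Icc 1 k, g t := by gcongr
      _ = (Φ k + ∑ t ∈ Finset.Icc 1 k, g t) + c := by abel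
      _ ≤ Φ 0 + k • c + c := by gcongr
      _ = Φ 0 + (k • c + c) := add_assoc _ _ _

section Coefficients

variable {L m n β p q : ℝ}

theorem fedsmoo_drift_coeff (hn : 0 < n) (hmn : 0 < 2 * m - n)
    (hq : q = 36 * p * β ^ 2 * L ^ 2 * (2 * m - n) / n) :
    q * ((2 * m - 2 * n) / (2 * m - n)) = q - 36 * p * β ^ 2 * L ^ 2 := by
  subst hq
  field_simp
  ring

theorem fedsmoo_local_coeff (hn : 0 < n) (hmn : 0 < 2 * m - n)
    (hD : 0 < 1 + 60 * β ^ 2 * L ^ 2 - 216 * m * β ^ 2 * L ^ 2 / n)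
    (hp : p = (L * (1 + 2 * β * L) / 2)
      / (1 + 60 * β ^ 2 * L ^ 2 - 216 * m * β ^ 2 * L ^ 2 / n))
    (hq : q = 36 * p * β ^ 2 * L ^ 2 * (2 * m - n) / n) :
    L * (1 + 2 * β * L) / 2 + q * ((6 * m - 2 * n) / (2 * m - n))
      = p * (1 - 12 * β ^ 2 * L ^ 2) := by
  have hpD : L * (1 + 2 * β * L) / 2
      = p * (1 + 60 * β ^ 2 * L ^ 2 - 216 * m * β ^ 2 * L ^ 2 / n) := by
    rw [hp, div_mul_cancel₀ _ hD.ne']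
  have hqlocal : q * ((6 * m - 2 * n) / (2 * m - n))
      = 36 * p * β ^ 2 * L ^ 2 * (6 * m - 2 * n) / n := by
    rw [hq]
    field_simp
  rw [hpD, hqlocal]
  field_simp
  ring

end Coefficients

theorem fedsmoo_round_descent {L m n β r p q F F' δ δ' υ G : ℝ} (hp : 0 ≤ p) (hq : 0 ≤ q)
    (hdrift : q * ((2 * m - 2 * n) / (2 * m - n)) = q - 36 * p * β ^ 2 * L ^ 2)
    (hlocal : L * (1 + 2 * β * L) / 2 + q * ((6 * m - 2 * n) / (2 * m - n))
      = p * (1 - 12 * β ^ 2 * L ^ 2))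
    (h1 : F' ≤ F + β * L ^ 2 * r ^ 2 + (L * (1 + 2 * β * L) / 2) * υ - (β / 2) * G)
    (h2 : (1 - 12 * β ^ 2 * L ^ 2) * υ
      ≤ 30 * β ^ 2 * L ^ 2 * r ^ 2 + 36 * β ^ 2 * L ^ 2 * δ + 12 * β ^ 2 * G)
    (h3 : δ' ≤ ((2 * m - 2 * n) / (2 * m - n)) * δ + ((6 * m - 2 * n) / (2 * m - n)) * υ) :
    F' + q * δ' + (β / 2 - 12 * p * β ^ 2) * G
      ≤ F + q * δ + (1 + 30 * p * β) * β * L ^ 2 * r ^ 2 := by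
  linear_combination h1 + p * h2 + q * h3 + δ * hdrift + υ * hlocal

theorem fedsmoo_convergence_rate_general
    (L m n β r : ℝ) (hL : 0 < L) (hn : 0 < n)
    (hmn : 0 < 2 * m - n) (hβ : 0 < β)
    (hD : 0 < 1 + 60 * β ^ 2 * L ^ 2 - 216 * m * β ^ 2 * L ^ 2 / n)
    (p q ζ : ℝ)
    (hp : p = (L * (1 + 2 * β * L) / 2)
      / (1 + 60 * β ^ 2 * L ^ 2 - 216 * m * β ^ 2 * L ^ 2 / n))
    (hq : q = 36 * p * β ^ 2 * L ^ 2 * (2 * m - n) / n)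
    (hζdef : ζ = β / 2 - 12 * p * β ^ 2) (hζ : 0 < ζ)
    (T : ℕ) (hT : 0 < T)
    (υ δ G F : ℕ → ℝ) (fstar : ℝ)
    (hδ : ∀ t, 0 ≤ δ t)
    (hF : ∀ t, fstar ≤ F t)
    (h1 : ∀ t ∈ Finset.Icc 1 T, F (t + 1)
      ≤ F t + β * L ^ 2 * r ^ 2 + (L * (1 + 2 * β * L) / 2) * υ t
        - (β / 2) * G t)
    (h2 : ∀ t ∈ Finset.Icc 1 T, (1 - 12 * β ^ 2 * L ^ 2) * υ t
      ≤ 30 * β ^ 2 * L ^ 2 * r ^ 2 + 36 * β ^ 2 * L ^ 2 * δ (t - 1)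
        + 12 * β ^ 2 * G t)
    (h3 : ∀ t ∈ Finset.Icc 1 T, δ t
      ≤ ((2 * m - 2 * n) / (2 * m - n)) * δ (t - 1)
        + ((6 * m - 2 * n) / (2 * m - n)) * υ t) :
    (1 / (T : ℝ)) * ∑ t ∈ Finset.Icc 1 T, G t
      ≤ (F 1 - fstar + q * δ 0) / (ζ * T)
        + (1 + 30 * p * β) * β * L ^ 2 * r ^ 2 / ζ := by
  set C := (1 + 30 * p * β) * β * L ^ 2 * r ^ 2
  have hp0 : 0 ≤ p := hp ▸ by positivity
  have hq0 : 0 ≤ q := hq ▸ by positivity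
  have hdescent : ∀ t ∈ Finset.Icc 1 T,
      (F (t + 1) + q * δ t) + ζ * G t ≤ (F (t - 1 + 1) + q * δ (t - 1)) + C := by
    intro t ht
    rw [Nat.sub_add_cancel (Finset.mem_Icc.1 ht).1, hζdef]
    exact fedsmoo_round_descent hp0 hq0 (fedsmoo_drift_coeff hn hmn hq)
      (fedsmoo_local_coeff hn hmn hD hp hq) (h1 t ht) (h2 t ht) (h3 t ht)
  have htelescope := Finset.add_sum_Icc_le_of_le_add (Φ := fun t => F (t + 1) + q * δ t) hdescent
  rw [← Finset.mul_sum, nsmul_eq_mul] at htelescope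
  have hbound : ζ * ∑ t ∈ Finset.Icc 1 T, G t ≤ F 1 - fstar + q * δ 0 + T * C := by
    linarith [hF (T + 1), mul_nonneg hq0 (hδ T)]
  have hT' : (0 : ℝ) < T := by exact_mod_cast hT
  calc (1 / (T : ℝ)) * ∑ t ∈ Finset.Icc 1 T, G t
      = (ζ * ∑ t ∈ Finset.Icc 1 T, G t) / (ζ * T) := by field_simp
    _ ≤ (F 1 - fstar + q * δ 0 + T * C) / (ζ * T) := by gcongr
    _ = (F 1 - fstar + q * δ 0) / (ζ * T) + C / ζ := by field_simp

/-- Sequence-level form of Theorem 4.1 (convergence rate of FedSMOO):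
`F t` plays the role of the expected global function value (bounded below by
`f*`), `υ t` the averaged local-update term, `δ t` the divergence drift, and
`G t` the squared global gradient norm.  With `p`, `q` and `ζ` defined from the
problem constants, the three per-round inequalities yield
`(1/T) ∑_{t=1}^T G t ≤ (F 1 - f* + q·δ 0)/(ζT) + (1 + 30pβ)βL²r²/ζ`. -/
theorem fedsmoo_convergence_rate
    (L m n β r : ℝ) (hL : 0 < L) (hn : 0 < n) (hnm : n ≤ m)
    (hmn : 0 < 2 * m - n) (hβ : 0 < β) (hr : 0 ≤ r)
    (hD : 0 < 1 + 60 * β ^ 2 * L ^ 2 - 216 * m * β ^ 2 * L ^ 2 / n)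
    (p q ζ : ℝ)
    (hp : p = (L * (1 + 2 * β * L) / 2)
      / (1 + 60 * β ^ 2 * L ^ 2 - 216 * m * β ^ 2 * L ^ 2 / n))
    (hq : q = 36 * p * β ^ 2 * L ^ 2 * (2 * m - n) / n)
    (hζdef : ζ = β / 2 - 12 * p * β ^ 2) (hζ : 0 < ζ)
    (T : ℕ) (hT : 0 < T)
    (υ δ G F : ℕ → ℝ) (fstar : ℝ)
    (hυ : ∀ t, 0 ≤ υ t) (hδ : ∀ t, 0 ≤ δ t) (hG : ∀ t, 0 ≤ G t)
    (hF : ∀ t, fstar ≤ F t)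
    (h1 : ∀ t ∈ Finset.Icc 1 T, F (t + 1)
      ≤ F t + β * L ^ 2 * r ^ 2 + (L * (1 + 2 * β * L) / 2) * υ t
        - (β / 2) * G t)
    (h2 : ∀ t ∈ Finset.Icc 1 T, (1 - 12 * β ^ 2 * L ^ 2) * υ t
      ≤ 30 * β ^ 2 * L ^ 2 * r ^ 2 + 36 * β ^ 2 * L ^ 2 * δ (t - 1)
        + 12 * β ^ 2 * G t)
    (h3 : ∀ t ∈ Finset.Icc 1 T, δ t
      ≤ ((2 * m - 2 * n) / (2 * m - n)) * δ (t - 1)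
        + ((6 * m - 2 * n) / (2 * m - n)) * υ t) :
    (1 / (T : ℝ)) * ∑ t ∈ Finset.Icc 1 T, G t
      ≤ (F 1 - fstar + q * δ 0) / (ζ * T)
        + (1 + 30 * p * β) * β * L ^ 2 * r ^ 2 / ζ :=
  fedsmoo_convergence_rate_general L m n β r hL hn hmn hβ hD p q ζ hp hq hζdef hζ T hT υ δ G F fstar
    hδ hF h1 h2 h3
end
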